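/- arXiv:math/9803092 — 2 statements merged into one kernel-verified Lean document; each statement's English description precedes it below -/
import Mathlib

section
/- In A(DT²_q) the element z := D⁻¹ad is a central idempotent: z² = z and zp = pz for all p ∈ A(DT²_q); it is self-adjoint, z* = z; and it is non-trivial: z ≠ 0 and z ≠ 1. Hence A(DT²_q) contains a non-trivial central idempotent (the quantum double-torus is disconnected). -/
open scoped TensorProduct
noncomputable section
namespace QDT

/-- generators a, b, c, d, D, D⁻¹ -/
inductive Gen : Type | a | b | c | d | D | Di

open FreeAlgebra in
/-- Defining relations of `A(U_{q⁻¹,q}(2))` (for `q ∈ U(1)`). -/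
inductive URel (q : ℂ) : FreeAlgebra ℂ Gen → FreeAlgebra ℂ Gen → Prop
  | ab : URel q (ι ℂ Gen.a * ι ℂ Gen.b) (q⁻¹ • (ι ℂ Gen.b * ι ℂ Gen.a))
  | cd : URel q (ι ℂ Gen.c * ι ℂ Gen.d) (q⁻¹ • (ι ℂ Gen.d * ι ℂ Gen.c))
  | ac : URel q (ι ℂ Gen.a * ι ℂ Gen.c) (q • (ι ℂ Gen.c * ι ℂ Gen.a))
  | bd : URel q (ι ℂ Gen.b * ι ℂ Gen.d) (q • (ι ℂ Gen.d * ι ℂ Gen.b))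
  | ad : URel q (ι ℂ Gen.a * ι ℂ Gen.d) (ι ℂ Gen.d * ι ℂ Gen.a)
  | bc : URel q (ι ℂ Gen.b * ι ℂ Gen.c) ((q ^ 2) • (ι ℂ Gen.c * ι ℂ Gen.b))
  | DDi : URel q (ι ℂ Gen.D * ι ℂ Gen.Di) 1
  | DiD : URel q (ι ℂ Gen.Di * ι ℂ Gen.D) 1
  | det : URel q (ι ℂ Gen.a * ι ℂ Gen.d - q⁻¹ • (ι ℂ Gen.b * ι ℂ Gen.c)) (ι ℂ Gen.D)

/-- The coordinate ring `A(U_{q⁻¹,q}(2))`, as the algebra presented by the above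
generators and relations. -/
abbrev Uq (q : ℂ) : Type := RingQuot (URel q)

namespace Uq
variable (q : ℂ)
def a : Uq q := RingQuot.mkAlgHom ℂ (URel q) (FreeAlgebra.ι ℂ Gen.a)
def b : Uq q := RingQuot.mkAlgHom ℂ (URel q) (FreeAlgebra.ι ℂ Gen.b)
def c : Uq q := RingQuot.mkAlgHom ℂ (URel q) (FreeAlgebra.ι ℂ Gen.c)
def d : Uq q := RingQuot.mkAlgHom ℂ (URel q) (FreeAlgebra.ι ℂ Gen.d)
def D : Uq q := RingQuot.mkAlgHom ℂ (URel q) (FreeAlgebra.ι ℂ Gen.D)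
def Di : Uq q := RingQuot.mkAlgHom ℂ (URel q) (FreeAlgebra.ι ℂ Gen.Di)
/-- `z := D⁻¹ a d`. -/
def z : Uq q := Di q * (a q * d q)
/-- `D^k` for `k ∈ ℤ`. -/
def Dz (k : ℤ) : Uq q := if 0 ≤ k then (D q) ^ k.toNat else (Di q) ^ (-k).toNat
end Uq

/-- The relations `ab = 0, ac = 0, cd = 0, bd = 0`; dividing by them realizes
the quotient of `A(U_{q⁻¹,q}(2))` by the two-sided ideal generated by `{ab, ac, cd, bd}`. -/
inductive DRel (q : ℂ) : Uq q → Uq q → Prop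
  | ab : DRel q (Uq.a q * Uq.b q) 0
  | ac : DRel q (Uq.a q * Uq.c q) 0
  | cd : DRel q (Uq.c q * Uq.d q) 0
  | bd : DRel q (Uq.b q * Uq.d q) 0

/-- The coordinate ring `A(DT²_q)` of the quantum double-torus: the quotient of
`A(U_{q⁻¹,q}(2))` by the two-sided ideal generated by `{ab, ac, cd, bd}`. -/
abbrev ADT (q : ℂ) : Type := RingQuot (DRel q)

namespace ADT
variable (q : ℂ)
/-- The canonical projection `A(U_{q⁻¹,q}(2)) → A(DT²_q)`. -/
def mk : Uq q →ₐ[ℂ] ADT q := RingQuot.mkAlgHom ℂ (DRel q)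
def a : ADT q := mk q (Uq.a q)
def b : ADT q := mk q (Uq.b q)
def c : ADT q := mk q (Uq.c q)
def d : ADT q := mk q (Uq.d q)
def D : ADT q := mk q (Uq.D q)
def Di : ADT q := mk q (Uq.Di q)
/-- `z := D⁻¹ a d ∈ A(DT²_q)`. -/
def z : ADT q := Di q * (a q * d q)
/-- `D^m` for `m ∈ ℤ`. -/
def Dz (m : ℤ) : ADT q := if 0 ≤ m then (D q) ^ m.toNat else (Di q) ^ (-m).toNat
end ADT

/- quantum torus -/
inductive TGen : Type | x | xi | y | yi

open FreeAlgebra in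
/-- Defining relations of the quantum torus `A(T²_r)`:
`x x⁻¹ = x⁻¹ x = y y⁻¹ = y⁻¹ y = 1` and `xy = r yx`. -/
inductive TRel (r : ℂ) : FreeAlgebra ℂ TGen → FreeAlgebra ℂ TGen → Prop
  | xxi : TRel r (ι ℂ TGen.x * ι ℂ TGen.xi) 1
  | xix : TRel r (ι ℂ TGen.xi * ι ℂ TGen.x) 1
  | yyi : TRel r (ι ℂ TGen.y * ι ℂ TGen.yi) 1
  | yiy : TRel r (ι ℂ TGen.yi * ι ℂ TGen.y) 1
  | xy : TRel r (ι ℂ TGen.x * ι ℂ TGen.y) (r • (ι ℂ TGen.y * ι ℂ TGen.x))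

/-- The quantum torus algebra `A(T²_r)`.  For `r = 1` this is the Laurent polynomial
algebra `A(T²) = ℂ[u,u⁻¹,v,v⁻¹]` (we write `u := x`, `v := y`). -/
abbrev AT (r : ℂ) : Type := RingQuot (TRel r)

namespace AT
variable (r : ℂ)
def x : AT r := RingQuot.mkAlgHom ℂ (TRel r) (FreeAlgebra.ι ℂ TGen.x)
def xi : AT r := RingQuot.mkAlgHom ℂ (TRel r) (FreeAlgebra.ι ℂ TGen.xi)
def y : AT r := RingQuot.mkAlgHom ℂ (TRel r) (FreeAlgebra.ι ℂ TGen.y)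
def yi : AT r := RingQuot.mkAlgHom ℂ (TRel r) (FreeAlgebra.ι ℂ TGen.yi)
/-- `x^k` for `k ∈ ℤ`. -/
def xz (k : ℤ) : AT r := if 0 ≤ k then (x r) ^ k.toNat else (xi r) ^ (-k).toNat
/-- `y^l` for `l ∈ ℤ`. -/
def yz (l : ℤ) : AT r := if 0 ≤ l then (y r) ^ l.toNat else (yi r) ^ (-l).toNat
/-- The monomial `x^k y^l` (i.e. `u^k v^l` when `r = 1`). -/
def uv (k l : ℤ) : AT r := xz r k * yz r l
end AT

/-- `A(T²)`, the Laurent polynomial algebra `ℂ[u,u⁻¹,v,v⁻¹]`, realized as the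
quantum torus at `r = 1`; `u, v` are group-like. -/
abbrev AT2 : Type := AT 1
def AT2.u : AT2 := AT.x 1
def AT2.v : AT2 := AT.y 1

/-- `A(ℤ₂) = ℂ × ℂ`, the algebra of functions on `ℤ/2ℤ`. -/
abbrev AZ2 : Type := ℂ × ℂ
def AZ2.e0 : AZ2 := (1, 0)
def AZ2.e1 : AZ2 := (0, 1)

/-- The value `j(u^k v^l)` of the cleaving map `j : A(T²) → A(DT²_q)`. -/
def jval (q : ℂ) (k l : ℤ) : ADT q :=
  if l < k then
    ADT.Dz q l * (ADT.a q ^ (k - l).toNat)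
      + ((-1 : ℂ) ^ l * q ^ (l ^ 2)) • (ADT.Dz q l * (ADT.c q ^ (k - l).toNat))
  else if k = l then
    ADT.Dz q k * ADT.z q + ((-1 : ℂ) ^ k) • (ADT.Dz q (-k) * (1 - ADT.z q))
  else
    ((-1 : ℂ) ^ k * q ^ (-(k ^ 2))) • (ADT.Dz q k * (ADT.b q ^ (l - k).toNat))
      + ADT.Dz q k * (ADT.d q ^ (l - k).toNat)

/-- The cocycle values `σ_q(k,l,m,n)`. -/
def sigmaq (q : ℂ) (k l m n : ℤ) : ℂ :=
  if l < k then
    (if n < m then q ^ (-(2 * k * n))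
     else if m = n then q ^ (-(m * (2 * k + m)))
     else if l + n < k + m then q ^ (-(2 * n * (k + m)))
     else if k + m = l + n then q ^ ((k + m) * (2 * l - k - m))
     else q ^ (2 * l * (k + m)))
  else if k = l then
    (if n < m then q ^ (-(k * (k + 2 * n)))
     else if m = n then 1
     else q ^ (k * (k + 2 * m)))
  else
    (if n < m then
      (if l + n < k + m then q ^ (-(2 * k * (l + n)))
       else if k + m = l + n then q ^ ((l + n) * (l + n - 2 * k))
       else q ^ (2 * m * (l + n)))
     else if m = n then q ^ (m * (m + 2 * l))
     else q ^ (2 * l * m))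


/-! ### Hypothesis bundles: Hopf-algebra and `*`-structure data, characterized by
their values on the generators (these maps exist and are unique, cf. the paper). -/

/-- The Hopf structure of `A(U_{q⁻¹,q}(2))`: comultiplication, counit and antipode,
characterized by their values on the generators. -/
structure UqHopf (q : ℂ) where
  Δ : Uq q →ₐ[ℂ] Uq q ⊗[ℂ] Uq q
  Δa : Δ (Uq.a q) = Uq.a q ⊗ₜ Uq.a q + Uq.b q ⊗ₜ Uq.c q
  Δb : Δ (Uq.b q) = Uq.a q ⊗ₜ Uq.b q + Uq.b q ⊗ₜ Uq.d q
  Δc : Δ (Uq.c q) = Uq.c q ⊗ₜ Uq.a q + Uq.d q ⊗ₜ Uq.c q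
  Δd : Δ (Uq.d q) = Uq.c q ⊗ₜ Uq.b q + Uq.d q ⊗ₜ Uq.d q
  ΔD : Δ (Uq.D q) = Uq.D q ⊗ₜ Uq.D q
  ΔDi : Δ (Uq.Di q) = Uq.Di q ⊗ₜ Uq.Di q
  ε : Uq q →ₐ[ℂ] ℂ
  εa : ε (Uq.a q) = 1
  εb : ε (Uq.b q) = 0
  εc : ε (Uq.c q) = 0
  εd : ε (Uq.d q) = 1
  εD : ε (Uq.D q) = 1
  εDi : ε (Uq.Di q) = 1
  S : Uq q →ₗ[ℂ] Uq q
  Sone : S 1 = 1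
  Smul : ∀ p r : Uq q, S (p * r) = S r * S p
  Sa : S (Uq.a q) = Uq.Di q * Uq.d q
  Sb : S (Uq.b q) = -(q⁻¹ • (Uq.Di q * Uq.b q))
  Sc : S (Uq.c q) = -(q • (Uq.Di q * Uq.c q))
  Sd : S (Uq.d q) = Uq.Di q * Uq.a q
  SD : S (Uq.D q) = Uq.Di q
  SDi : S (Uq.Di q) = Uq.D q

/-- The comultiplication and counit of `A(DT²_q)`, characterized by generator values. -/
structure ADTCoalg (q : ℂ) where
  Δ : ADT q →ₐ[ℂ] ADT q ⊗[ℂ] ADT q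
  Δa : Δ (ADT.a q) = ADT.a q ⊗ₜ ADT.a q + ADT.b q ⊗ₜ ADT.c q
  Δb : Δ (ADT.b q) = ADT.a q ⊗ₜ ADT.b q + ADT.b q ⊗ₜ ADT.d q
  Δc : Δ (ADT.c q) = ADT.c q ⊗ₜ ADT.a q + ADT.d q ⊗ₜ ADT.c q
  Δd : Δ (ADT.d q) = ADT.c q ⊗ₜ ADT.b q + ADT.d q ⊗ₜ ADT.d q
  ΔD : Δ (ADT.D q) = ADT.D q ⊗ₜ ADT.D q
  ΔDi : Δ (ADT.Di q) = ADT.Di q ⊗ₜ ADT.Di q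
  ε : ADT q →ₐ[ℂ] ℂ
  εa : ε (ADT.a q) = 1
  εb : ε (ADT.b q) = 0
  εc : ε (ADT.c q) = 0
  εd : ε (ADT.d q) = 1
  εD : ε (ADT.D q) = 1
  εDi : ε (ADT.Di q) = 1

/-- The antipode of `A(DT²_q)`, a linear antimultiplicative map, characterized by
its generator values. -/
structure ADTAntipode (q : ℂ) where
  S : ADT q →ₗ[ℂ] ADT q
  Sone : S 1 = 1
  Smul : ∀ p r : ADT q, S (p * r) = S r * S p
  Sa : S (ADT.a q) = ADT.Di q * ADT.d q
  Sb : S (ADT.b q) = -(q⁻¹ • (ADT.Di q * ADT.b q))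
  Sc : S (ADT.c q) = -(q • (ADT.Di q * ADT.c q))
  Sd : S (ADT.d q) = ADT.Di q * ADT.a q
  SD : S (ADT.D q) = ADT.Di q
  SDi : S (ADT.Di q) = ADT.D q

/-- A `*`-structure (conjugate-linear antimultiplicative involution) on a ℂ-algebra. -/
structure StarData (A : Type) [Ring A] [Algebra ℂ A] where
  st : A → A
  add : ∀ p r : A, st (p + r) = st p + st r
  smul : ∀ (c : ℂ) (p : A), st (c • p) = (starRingEnd ℂ c) • st p
  mul : ∀ p r : A, st (p * r) = st r * st p
  invol : ∀ p : A, st (st p) = p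

/-- The `*`-structure of `A(DT²_q)`:
`a* = D⁻¹d`, `b* = −qD⁻¹c`, `c* = −q⁻¹D⁻¹b`, `d* = D⁻¹a`, `(D^{±1})* = D^{∓1}`. -/
structure ADTStar (q : ℂ) extends StarData (ADT q) where
  sta : st (ADT.a q) = ADT.Di q * ADT.d q
  stb : st (ADT.b q) = -(q • (ADT.Di q * ADT.c q))
  stc : st (ADT.c q) = -(q⁻¹ • (ADT.Di q * ADT.b q))
  std : st (ADT.d q) = ADT.Di q * ADT.a q
  stD : st (ADT.D q) = ADT.Di q
  stDi : st (ADT.Di q) = ADT.D q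

/-- The `*`-structure of the quantum torus: `x* = x⁻¹`, `y* = y⁻¹`. -/
structure ATStar (r : ℂ) extends StarData (AT r) where
  stx : st (AT.x r) = AT.xi r
  sty : st (AT.y r) = AT.yi r

/-- The Hopf algebra map `π : A(DT²_q) → A(T²)` "setting z = 1":
`π(a) = u`, `π(d) = v`, `π(b) = π(c) = 0`, `π(D^{±1}) = (uv)^{±1}`. -/
structure PiMap (q : ℂ) where
  π : ADT q →ₐ[ℂ] AT2
  pa : π (ADT.a q) = AT2.u
  pb : π (ADT.b q) = 0
  pc : π (ADT.c q) = 0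
  pd : π (ADT.d q) = AT2.v
  pD : π (ADT.D q) = AT2.u * AT2.v
  pDi : π (ADT.Di q) = AT.xi 1 * AT.yi 1

/-- The Hopf structure of `A(T²)`: `u`, `v` (and their inverses) are group-like. -/
structure AT2Coalg where
  Δ : AT2 →ₐ[ℂ] AT2 ⊗[ℂ] AT2
  Δu : Δ AT2.u = AT2.u ⊗ₜ AT2.u
  Δv : Δ AT2.v = AT2.v ⊗ₜ AT2.v
  Δui : Δ (AT.xi 1) = AT.xi 1 ⊗ₜ AT.xi 1
  Δvi : Δ (AT.yi 1) = AT.yi 1 ⊗ₜ AT.yi 1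
  ε : AT2 →ₐ[ℂ] ℂ
  εu : ε AT2.u = 1
  εv : ε AT2.v = 1
  εui : ε (AT.xi 1) = 1
  εvi : ε (AT.yi 1) = 1

/-- The Hopf structure of `A(ℤ₂)`. -/
structure Z2Hopf where
  Δ : AZ2 →ₐ[ℂ] AZ2 ⊗[ℂ] AZ2
  Δe0 : Δ AZ2.e0 = AZ2.e0 ⊗ₜ AZ2.e0 + AZ2.e1 ⊗ₜ AZ2.e1
  Δe1 : Δ AZ2.e1 = AZ2.e0 ⊗ₜ AZ2.e1 + AZ2.e1 ⊗ₜ AZ2.e0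
  ε : AZ2 →ₐ[ℂ] ℂ
  ε0 : ε AZ2.e0 = 1
  ε1 : ε AZ2.e1 = 0

/-- The Hopf algebra injection `i : A(ℤ₂) → A(DT²_q)`, `i(e₀) = z`, `i(e₁) = 1−z`. -/
structure IMap (q : ℂ) where
  i : AZ2 →ₐ[ℂ] ADT q
  ie0 : i AZ2.e0 = ADT.z q
  ie1 : i AZ2.e1 = 1 - ADT.z q

/-- The cleaving map `j : A(T²) → A(DT²_q)`, the linear map with `j(u^k v^l) = jval q k l`. -/
structure JMap (q : ℂ) where
  j : AT2 →ₗ[ℂ] ADT q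
  jv : ∀ k l : ℤ, j (AT.uv 1 k l) = jval q k l

/-- The convolution inverse `j⁻¹` of the cleaving map:
the linear map with `j⁻¹(u^k v^l) = (j(u^k v^l))⁻¹`. -/
structure JInvMap (q : ℂ) where
  jinv : AT2 →ₗ[ℂ] ADT q
  left : ∀ k l : ℤ, jinv (AT.uv 1 k l) * jval q k l = 1
  right : ∀ k l : ℤ, jval q k l * jinv (AT.uv 1 k l) = 1

/-- The Haar functional of `A(DT²_q)`: the linear functional vanishing on all
basis elements except `h(z) = h(1−z) = 1/2`. -/
structure HaarData (q : ℂ) where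
  h : ADT q →ₗ[ℂ] ℂ
  ha : ∀ (m : ℤ) (n : ℕ), 1 ≤ n → h (ADT.Dz q m * ADT.a q ^ n) = 0
  hb : ∀ (m : ℤ) (n : ℕ), 1 ≤ n → h (ADT.Dz q m * ADT.b q ^ n) = 0
  hc : ∀ (m : ℤ) (n : ℕ), 1 ≤ n → h (ADT.Dz q m * ADT.c q ^ n) = 0
  hd : ∀ (m : ℤ) (n : ℕ), 1 ≤ n → h (ADT.Dz q m * ADT.d q ^ n) = 0
  hz : ∀ m : ℤ, h (ADT.Dz q m * ADT.z q) = if m = 0 then 1/2 else 0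
  hoz : ∀ m : ℤ, h (ADT.Dz q m * (1 - ADT.z q)) = if m = 0 then 1/2 else 0

/-- `ℓ(p) = p₍₁₎ · j⁻¹(π(p₍₂₎))`, as a composite of linear maps. -/
def ellMap (q : ℂ) (Δ : ADT q →ₐ[ℂ] ADT q ⊗[ℂ] ADT q) (π : ADT q →ₐ[ℂ] AT2)
    (jinv : AT2 →ₗ[ℂ] ADT q) : ADT q →ₗ[ℂ] ADT q :=
  (LinearMap.mul' ℂ (ADT q)) ∘ₗ
    (TensorProduct.map LinearMap.id (jinv ∘ₗ π.toLinearMap)) ∘ₗ Δ.toLinearMap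

/-! ### Auxiliary lemmas for Statement 3 -/
section Aux

variable {q : ℂ}

private lemma add_cancel_ADT {q : ℂ} {x y z : ADT q} (h : x + z = y + z) : x = y := by
  have h2 := congrArg (fun t => t + (-z)) h
  simp only [add_assoc] at h2
  rw [add_neg_cancel (a := z)] at h2
  simpa using h2

private lemma urel {x y : FreeAlgebra ℂ Gen} (h : URel q x y) :
    RingQuot.mkAlgHom ℂ (URel q) x = RingQuot.mkAlgHom ℂ (URel q) y :=
  RingQuot.mkAlgHom_rel ℂ h

lemma rel_ab : ADT.a q * ADT.b q = q⁻¹ • (ADT.b q * ADT.a q) := by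
  have := congrArg (ADT.mk q) (urel (URel.ab (q := q)))
  simpa [Uq.a, Uq.b, ADT.a, ADT.b, ADT.mk, map_mul, map_smul] using this

lemma rel_cd : ADT.c q * ADT.d q = q⁻¹ • (ADT.d q * ADT.c q) := by
  have := congrArg (ADT.mk q) (urel (URel.cd (q := q)))
  simpa [Uq.c, Uq.d, ADT.c, ADT.d, ADT.mk, map_mul, map_smul] using this

lemma rel_ac : ADT.a q * ADT.c q = q • (ADT.c q * ADT.a q) := by
  have := congrArg (ADT.mk q) (urel (URel.ac (q := q)))
  simpa [Uq.a, Uq.c, ADT.a, ADT.c, ADT.mk, map_mul, map_smul] using this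

lemma rel_bd : ADT.b q * ADT.d q = q • (ADT.d q * ADT.b q) := by
  have := congrArg (ADT.mk q) (urel (URel.bd (q := q)))
  simpa [Uq.b, Uq.d, ADT.b, ADT.d, ADT.mk, map_mul, map_smul] using this

lemma rel_ad : ADT.a q * ADT.d q = ADT.d q * ADT.a q := by
  have := congrArg (ADT.mk q) (urel (URel.ad (q := q)))
  simpa [Uq.a, Uq.d, ADT.a, ADT.d, ADT.mk, map_mul] using this

lemma rel_bc : ADT.b q * ADT.c q = (q ^ 2) • (ADT.c q * ADT.b q) := by
  have := congrArg (ADT.mk q) (urel (URel.bc (q := q)))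
  simpa [Uq.b, Uq.c, ADT.b, ADT.c, ADT.mk, map_mul, map_smul] using this

lemma rel_DDi : ADT.D q * ADT.Di q = 1 := by
  have := congrArg (ADT.mk q) (urel (URel.DDi (q := q)))
  simpa [Uq.D, Uq.Di, ADT.D, ADT.Di, ADT.mk, map_mul, map_one] using this

lemma rel_DiD : ADT.Di q * ADT.D q = 1 := by
  have := congrArg (ADT.mk q) (urel (URel.DiD (q := q)))
  simpa [Uq.D, Uq.Di, ADT.D, ADT.Di, ADT.mk, map_mul, map_one] using this

lemma urel_det' : Uq.a q * Uq.d q = Uq.D q + q⁻¹ • (Uq.b q * Uq.c q) := by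
  have h := urel (URel.det (q := q))
  simp only [map_sub, map_mul, map_smul] at h
  rw [sub_eq_iff_eq_add] at h
  simpa [Uq.a, Uq.b, Uq.c, Uq.d, Uq.D] using h

lemma rel_det' : ADT.a q * ADT.d q = ADT.D q + q⁻¹ • (ADT.b q * ADT.c q) := by
  have := congrArg (ADT.mk q) (urel_det' (q := q))
  simpa [ADT.a, ADT.b, ADT.c, ADT.d, ADT.D, ADT.mk, map_mul, map_smul, map_add] using this

lemma zab : ADT.a q * ADT.b q = 0 := by
  have := RingQuot.mkAlgHom_rel ℂ (DRel.ab (q := q))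
  simpa [ADT.a, ADT.b, ADT.mk, map_mul, map_zero] using this

lemma zac : ADT.a q * ADT.c q = 0 := by
  have := RingQuot.mkAlgHom_rel ℂ (DRel.ac (q := q))
  simpa [ADT.a, ADT.c, ADT.mk, map_mul, map_zero] using this

lemma zcd : ADT.c q * ADT.d q = 0 := by
  have := RingQuot.mkAlgHom_rel ℂ (DRel.cd (q := q))
  simpa [ADT.c, ADT.d, ADT.mk, map_mul, map_zero] using this

lemma zbd : ADT.b q * ADT.d q = 0 := by
  have := RingQuot.mkAlgHom_rel ℂ (DRel.bd (q := q))
  simpa [ADT.b, ADT.d, ADT.mk, map_mul, map_zero] using this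

variable (hq0 : q ≠ 0)
include hq0

lemma zba : ADT.b q * ADT.a q = 0 := by
  have h := rel_ab (q := q)
  rw [zab] at h
  exact (smul_eq_zero.mp h.symm).resolve_left (inv_ne_zero hq0)

lemma zca : ADT.c q * ADT.a q = 0 := by
  have h := rel_ac (q := q)
  rw [zac] at h
  exact (smul_eq_zero.mp h.symm).resolve_left hq0

lemma zdc : ADT.d q * ADT.c q = 0 := by
  have h := rel_cd (q := q)
  rw [zcd] at h
  exact (smul_eq_zero.mp h.symm).resolve_left (inv_ne_zero hq0)

lemma zdb : ADT.d q * ADT.b q = 0 := by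
  have h := rel_bd (q := q)
  rw [zbd] at h
  exact (smul_eq_zero.mp h.symm).resolve_left hq0

lemma rel_cb : ADT.c q * ADT.b q = (q⁻¹ * q⁻¹) • (ADT.b q * ADT.c q) := by
  have h := rel_bc (q := q)
  rw [h, smul_smul]
  rw [show q⁻¹ * q⁻¹ * q ^ 2 = 1 by field_simp, one_smul]

lemma comm_Da : ADT.D q * ADT.a q = ADT.a q * ADT.D q := by
  have h : (ADT.a q * ADT.d q) * ADT.a q = ADT.a q * (ADT.a q * ADT.d q) := by
    rw [mul_assoc, ← rel_ad]
  rw [rel_det'] at h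
  rw [add_mul, mul_add, smul_mul_assoc, mul_smul_comm,
    mul_assoc (ADT.b q) (ADT.c q) (ADT.a q), zca hq0, mul_zero, smul_zero, add_zero,
    ← mul_assoc (ADT.a q) (ADT.b q) (ADT.c q), zab, zero_mul, smul_zero, add_zero] at h
  exact h

lemma comm_Dd : ADT.D q * ADT.d q = ADT.d q * ADT.D q := by
  have h : ADT.d q * (ADT.a q * ADT.d q) = (ADT.a q * ADT.d q) * ADT.d q := by
    rw [← mul_assoc, ← rel_ad, mul_assoc]
  rw [rel_det'] at h
  rw [add_mul, mul_add, smul_mul_assoc, mul_smul_comm,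
    mul_assoc (ADT.b q) (ADT.c q) (ADT.d q), zcd, mul_zero, smul_zero, add_zero,
    ← mul_assoc (ADT.d q) (ADT.b q) (ADT.c q), zdb hq0, zero_mul, smul_zero, add_zero] at h
  exact h.symm

lemma comm_Db : ADT.D q * ADT.b q = (q⁻¹ * q⁻¹) • (ADT.b q * ADT.D q) := by
  have h1 : (ADT.a q * ADT.d q) * ADT.b q = 0 := by
    rw [mul_assoc, zdb hq0, mul_zero]
  have h2 : ADT.b q * (ADT.a q * ADT.d q) = 0 := by
    rw [← mul_assoc, zba hq0, zero_mul]
  rw [rel_det'] at h1 h2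
  rw [add_mul, smul_mul_assoc, mul_assoc, rel_cb hq0, mul_smul_comm, smul_smul] at h1
  rw [mul_add, mul_smul_comm] at h2
  -- h1 : D*b + (q⁻¹*(q⁻¹*q⁻¹)) • (b*(b*c)) = 0
  -- h2 : b*D + q⁻¹ • (b*(b*c)) = 0
  have h3 := congrArg (fun x : ADT q => (q⁻¹ * q⁻¹) • x) h2
  simp only [smul_add, smul_smul, smul_zero] at h3
  rw [show q⁻¹ * q⁻¹ * q⁻¹ = q⁻¹ * (q⁻¹ * q⁻¹) from by ring] at h3
  exact add_cancel_ADT (h1.trans h3.symm)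

lemma comm_Dc : ADT.D q * ADT.c q = (q * q) • (ADT.c q * ADT.D q) := by
  have h1 : (ADT.a q * ADT.d q) * ADT.c q = 0 := by
    rw [mul_assoc, zdc hq0, mul_zero]
  have h2 : ADT.c q * (ADT.a q * ADT.d q) = 0 := by
    rw [← mul_assoc, zca hq0, zero_mul]
  rw [rel_det'] at h1 h2
  rw [add_mul, smul_mul_assoc, mul_assoc] at h1
  rw [mul_add, mul_smul_comm, ← mul_assoc, rel_cb hq0, smul_mul_assoc, smul_smul,
    mul_assoc] at h2
  -- h1 : D*c + q⁻¹ • (b*(c*c)) = 0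
  -- h2 : c*D + (q⁻¹*(q⁻¹*q⁻¹)) • (b*(c*c)) = 0
  have h3 := congrArg (fun x : ADT q => (q * q) • x) h2
  simp only [smul_add, smul_smul, smul_zero] at h3
  rw [show q * q * (q⁻¹ * (q⁻¹ * q⁻¹)) = q⁻¹ from by field_simp] at h3
  exact add_cancel_ADT (h1.trans h3.symm)

lemma comm_Ea : ADT.a q * ADT.Di q = ADT.Di q * ADT.a q := by
  calc ADT.a q * ADT.Di q
      = (ADT.Di q * ADT.D q) * (ADT.a q * ADT.Di q) := by rw [rel_DiD, one_mul]
    _ = ADT.Di q * ((ADT.D q * ADT.a q) * ADT.Di q) := by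
        rw [mul_assoc (ADT.Di q) (ADT.D q) _, ← mul_assoc (ADT.D q) (ADT.a q) (ADT.Di q)]
    _ = ADT.Di q * ((ADT.a q * ADT.D q) * ADT.Di q) := by rw [comm_Da hq0]
    _ = ADT.Di q * ADT.a q := by
        rw [mul_assoc (ADT.a q) (ADT.D q) (ADT.Di q), rel_DDi, mul_one]

lemma comm_Ed : ADT.d q * ADT.Di q = ADT.Di q * ADT.d q := by
  calc ADT.d q * ADT.Di q
      = (ADT.Di q * ADT.D q) * (ADT.d q * ADT.Di q) := by rw [rel_DiD, one_mul]
    _ = ADT.Di q * ((ADT.D q * ADT.d q) * ADT.Di q) := by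
        rw [mul_assoc (ADT.Di q) (ADT.D q) _, ← mul_assoc (ADT.D q) (ADT.d q) (ADT.Di q)]
    _ = ADT.Di q * ((ADT.d q * ADT.D q) * ADT.Di q) := by rw [comm_Dd hq0]
    _ = ADT.Di q * ADT.d q := by
        rw [mul_assoc (ADT.d q) (ADT.D q) (ADT.Di q), rel_DDi, mul_one]

lemma comm_Eb : ADT.b q * ADT.Di q = (q⁻¹ * q⁻¹) • (ADT.Di q * ADT.b q) := by
  calc ADT.b q * ADT.Di q
      = (ADT.Di q * ADT.D q) * (ADT.b q * ADT.Di q) := by rw [rel_DiD, one_mul]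
    _ = ADT.Di q * ((ADT.D q * ADT.b q) * ADT.Di q) := by
        rw [mul_assoc (ADT.Di q) (ADT.D q) _, ← mul_assoc (ADT.D q) (ADT.b q) (ADT.Di q)]
    _ = (q⁻¹ * q⁻¹) • (ADT.Di q * ((ADT.b q * ADT.D q) * ADT.Di q)) := by
        rw [comm_Db hq0, smul_mul_assoc, mul_smul_comm]
    _ = (q⁻¹ * q⁻¹) • (ADT.Di q * ADT.b q) := by
        rw [mul_assoc (ADT.b q) (ADT.D q) (ADT.Di q), rel_DDi, mul_one]

lemma comm_Ec : ADT.c q * ADT.Di q = (q * q) • (ADT.Di q * ADT.c q) := by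
  calc ADT.c q * ADT.Di q
      = (ADT.Di q * ADT.D q) * (ADT.c q * ADT.Di q) := by rw [rel_DiD, one_mul]
    _ = ADT.Di q * ((ADT.D q * ADT.c q) * ADT.Di q) := by
        rw [mul_assoc (ADT.Di q) (ADT.D q) _, ← mul_assoc (ADT.D q) (ADT.c q) (ADT.Di q)]
    _ = (q * q) • (ADT.Di q * ((ADT.c q * ADT.D q) * ADT.Di q)) := by
        rw [comm_Dc hq0, smul_mul_assoc, mul_smul_comm]
    _ = (q * q) • (ADT.Di q * ADT.c q) := by
        rw [mul_assoc (ADT.c q) (ADT.D q) (ADT.Di q), rel_DDi, mul_one]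

lemma comm_adD : (ADT.a q * ADT.d q) * ADT.D q = ADT.D q * (ADT.a q * ADT.d q) := by
  rw [mul_assoc, ← comm_Dd hq0, ← mul_assoc, ← comm_Da hq0, mul_assoc]

lemma comm_adE : (ADT.a q * ADT.d q) * ADT.Di q = ADT.Di q * (ADT.a q * ADT.d q) := by
  rw [mul_assoc, comm_Ed hq0, ← mul_assoc, comm_Ea hq0, mul_assoc]

lemma adad : (ADT.a q * ADT.d q) * (ADT.a q * ADT.d q)
    = ADT.D q * (ADT.a q * ADT.d q) := by
  have h : (ADT.a q * ADT.d q) * (ADT.a q * ADT.d q)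
      = (ADT.D q + q⁻¹ • (ADT.b q * ADT.c q)) * (ADT.a q * ADT.d q) := by
    rw [← rel_det']
  rw [add_mul, smul_mul_assoc, mul_assoc (ADT.b q) (ADT.c q) _,
    ← mul_assoc (ADT.c q) (ADT.a q) (ADT.d q), zca hq0, zero_mul, mul_zero, smul_zero,
    add_zero] at h
  exact h

lemma z_idem : ADT.z q * ADT.z q = ADT.z q := by
  simp only [ADT.z]
  rw [mul_assoc (ADT.Di q) (ADT.a q * ADT.d q) _,
    ← mul_assoc (ADT.a q * ADT.d q) (ADT.Di q) _, comm_adE hq0,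
    mul_assoc (ADT.Di q) (ADT.a q * ADT.d q) (ADT.a q * ADT.d q), adad hq0,
    ← mul_assoc (ADT.Di q) (ADT.D q) _, rel_DiD, one_mul]

lemma comm_z_a : ADT.z q * ADT.a q = ADT.a q * ADT.z q := by
  simp only [ADT.z]
  rw [mul_assoc (ADT.Di q) _ (ADT.a q), mul_assoc (ADT.a q) (ADT.d q) (ADT.a q),
    ← rel_ad, ← mul_assoc (ADT.Di q) (ADT.a q) _, ← comm_Ea hq0,
    mul_assoc (ADT.a q) (ADT.Di q) _]

lemma comm_z_d : ADT.z q * ADT.d q = ADT.d q * ADT.z q := by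
  simp only [ADT.z]
  rw [mul_assoc (ADT.Di q) _ (ADT.d q), ← mul_assoc (ADT.d q) (ADT.Di q) _, comm_Ed hq0,
    mul_assoc (ADT.Di q) (ADT.d q) _, ← mul_assoc (ADT.d q) (ADT.a q) (ADT.d q),
    ← rel_ad, mul_assoc (ADT.a q) (ADT.d q) (ADT.d q)]

lemma comm_z_b : ADT.z q * ADT.b q = ADT.b q * ADT.z q := by
  simp only [ADT.z]
  have h1 : ADT.Di q * (ADT.a q * ADT.d q) * ADT.b q = 0 := by
    rw [mul_assoc, mul_assoc, zdb hq0, mul_zero, mul_zero]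
  have h2 : ADT.b q * (ADT.Di q * (ADT.a q * ADT.d q)) = 0 := by
    rw [← mul_assoc, comm_Eb hq0, smul_mul_assoc, mul_assoc,
      ← mul_assoc (ADT.b q) (ADT.a q) (ADT.d q), zba hq0, zero_mul, mul_zero, smul_zero]
  rw [h1, h2]

lemma comm_z_c : ADT.z q * ADT.c q = ADT.c q * ADT.z q := by
  simp only [ADT.z]
  have h1 : ADT.Di q * (ADT.a q * ADT.d q) * ADT.c q = 0 := by
    rw [mul_assoc, mul_assoc, zdc hq0, mul_zero, mul_zero]
  have h2 : ADT.c q * (ADT.Di q * (ADT.a q * ADT.d q)) = 0 := by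
    rw [← mul_assoc, comm_Ec hq0, smul_mul_assoc, mul_assoc,
      ← mul_assoc (ADT.c q) (ADT.a q) (ADT.d q), zca hq0, zero_mul, mul_zero, smul_zero]
  rw [h1, h2]

lemma comm_z_D : ADT.z q * ADT.D q = ADT.D q * ADT.z q := by
  simp only [ADT.z]
  rw [mul_assoc (ADT.Di q) _ (ADT.D q), comm_adD hq0, ← mul_assoc (ADT.Di q) (ADT.D q) _,
    rel_DiD, one_mul, ← mul_assoc (ADT.D q) (ADT.Di q) _, rel_DDi, one_mul]

lemma comm_z_E : ADT.z q * ADT.Di q = ADT.Di q * ADT.z q := by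
  simp only [ADT.z]
  rw [mul_assoc (ADT.Di q) _ (ADT.Di q), comm_adE hq0]

end Aux


section Maps

variable {q : ℂ}

/-! ### A character with `z ↦ 1` -/

def ev1 (q : ℂ) : FreeAlgebra ℂ Gen →ₐ[ℂ] ℂ :=
  FreeAlgebra.lift ℂ (fun g => match g with
    | Gen.a => 1 | Gen.b => 0 | Gen.c => 0 | Gen.d => 1 | Gen.D => 1 | Gen.Di => 1)

lemma ev1_rel {x y : FreeAlgebra ℂ Gen} (h : URel q x y) : ev1 q x = ev1 q y := by
  induction h <;>
    simp [ev1, map_mul, map_smul, map_sub, FreeAlgebra.lift_ι_apply]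

def ev1U (q : ℂ) : Uq q →ₐ[ℂ] ℂ :=
  RingQuot.liftAlgHom ℂ ⟨ev1 q, fun _ _ h => ev1_rel h⟩

lemma ev1U_gen (g : Gen) :
    ev1U q (RingQuot.mkAlgHom ℂ (URel q) (FreeAlgebra.ι ℂ g))
      = ev1 q (FreeAlgebra.ι ℂ g) := by
  simp [ev1U, RingQuot.liftAlgHom_mkAlgHom_apply]

lemma ev1U_a : ev1U q (Uq.a q) = 1 := by
  rw [Uq.a, ev1U_gen]; simp [ev1, FreeAlgebra.lift_ι_apply]
lemma ev1U_b : ev1U q (Uq.b q) = 0 := by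
  rw [Uq.b, ev1U_gen]; simp [ev1, FreeAlgebra.lift_ι_apply]
lemma ev1U_c : ev1U q (Uq.c q) = 0 := by
  rw [Uq.c, ev1U_gen]; simp [ev1, FreeAlgebra.lift_ι_apply]
lemma ev1U_d : ev1U q (Uq.d q) = 1 := by
  rw [Uq.d, ev1U_gen]; simp [ev1, FreeAlgebra.lift_ι_apply]
lemma ev1U_Di : ev1U q (Uq.Di q) = 1 := by
  rw [Uq.Di, ev1U_gen]; simp [ev1, FreeAlgebra.lift_ι_apply]

lemma ev1U_rel {x y : Uq q} (h : DRel q x y) : ev1U q x = ev1U q y := by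
  cases h <;> simp [map_mul, map_zero, ev1U_a, ev1U_b, ev1U_c, ev1U_d]

def ev1A (q : ℂ) : ADT q →ₐ[ℂ] ℂ :=
  RingQuot.liftAlgHom ℂ ⟨ev1U q, fun _ _ h => ev1U_rel h⟩

lemma ev1A_mk (u : Uq q) : ev1A q (ADT.mk q u) = ev1U q u := by
  simp [ev1A, ADT.mk, RingQuot.liftAlgHom_mkAlgHom_apply]

lemma ev1A_z : ev1A q (ADT.z q) = 1 := by
  simp only [ADT.z, ADT.a, ADT.d, ADT.Di, map_mul, ev1A_mk, ev1U_a, ev1U_d, ev1U_Di]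
  norm_num

lemma z_ne_zero : ADT.z q ≠ 0 := by
  intro h
  have h2 := ev1A_z (q := q)
  rw [h, map_zero] at h2
  exact one_ne_zero h2.symm

/-! ### A representation with `z ↦ 0` -/

def sh (k : ℤ) : (ℤ →₀ ℂ) →ₗ[ℂ] (ℤ →₀ ℂ) := Finsupp.lmapDomain ℂ ℂ (fun n => n + k)

def dg (q : ℂ) (k : ℤ) : (ℤ →₀ ℂ) →ₗ[ℂ] (ℤ →₀ ℂ) :=
  Finsupp.lsum ℂ fun n => q ^ (k * n) • Finsupp.lsingle n

lemma sh_single (k n : ℤ) (x : ℂ) :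
    sh k (Finsupp.single n x) = Finsupp.single (n + k) x := by
  simp only [sh, Finsupp.lmapDomain_apply, Finsupp.mapDomain_single]

lemma dg_single (k n : ℤ) (x : ℂ) :
    dg q k (Finsupp.single n x) = q ^ (k * n) • Finsupp.single n x := by
  simp only [dg, Finsupp.lsum_single, LinearMap.smul_apply, Finsupp.lsingle_apply]

lemma sh_mul (k l : ℤ) :
    (sh k * sh l : Module.End ℂ (ℤ →₀ ℂ)) = sh (k + l) := by
  apply Finsupp.lhom_ext
  intro n x
  simp only [Module.End.mul_apply, sh_single]
  rw [add_assoc, add_comm l k]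

lemma sh_zero : (sh 0 : Module.End ℂ (ℤ →₀ ℂ)) = 1 := by
  apply Finsupp.lhom_ext
  intro n x
  rw [sh_single, Module.End.one_apply, add_zero]

lemma dg_mul (hq0 : q ≠ 0) (k l : ℤ) :
    (dg q k * dg q l : Module.End ℂ (ℤ →₀ ℂ)) = dg q (k + l) := by
  apply Finsupp.lhom_ext
  intro n x
  simp only [Module.End.mul_apply, dg_single, map_smul, smul_smul]
  rw [← zpow_add₀ hq0, ← add_mul, add_comm l k]

lemma dg_zero : (dg q 0 : Module.End ℂ (ℤ →₀ ℂ)) = 1 := by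
  apply Finsupp.lhom_ext
  intro n x
  simp only [dg_single, zero_mul, zpow_zero, one_smul, Module.End.one_apply]

lemma dg_sh_comm (hq0 : q ≠ 0) :
    (dg q 2 * sh 1 : Module.End ℂ (ℤ →₀ ℂ)) = (q ^ 2) • (sh 1 * dg q 2) := by
  apply Finsupp.lhom_ext
  intro n x
  simp only [Module.End.mul_apply, dg_single, sh_single, map_smul, LinearMap.smul_apply,
    smul_smul]
  congr 1
  rw [show (2 * (n + 1) : ℤ) = 2 * n + 2 by ring, zpow_add₀ hq0,
    show (q : ℂ) ^ (2 : ℤ) = q ^ (2 : ℕ) from by norm_cast, mul_comm]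

def ev2 (q : ℂ) : FreeAlgebra ℂ Gen →ₐ[ℂ] Module.End ℂ (ℤ →₀ ℂ) :=
  FreeAlgebra.lift ℂ (fun g => match g with
    | Gen.a => 0
    | Gen.b => dg q 2
    | Gen.c => sh 1
    | Gen.d => 0
    | Gen.D => -(q⁻¹ • (dg q 2 * sh 1))
    | Gen.Di => -(q • (sh (-1) * dg q (-2))))

lemma ev2_DDi (hq0 : q ≠ 0) :
    (-(q⁻¹ • (dg q 2 * sh 1)) * -(q • (sh (-1) * dg q (-2)))
      : Module.End ℂ (ℤ →₀ ℂ)) = 1 := by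
  have hneg : (-(q⁻¹ • (dg q 2 * sh 1)) * -(q • (sh (-1) * dg q (-2)))
      : Module.End ℂ (ℤ →₀ ℂ))
      = (q⁻¹ • (dg q 2 * sh 1)) * (q • (sh (-1) * dg q (-2))) := by
    apply Finsupp.lhom_ext
    intro n v
    simp only [Module.End.mul_apply, LinearMap.neg_apply, map_neg, neg_neg]
  rw [hneg, smul_mul_assoc, mul_smul_comm, smul_smul, inv_mul_cancel₀ hq0,
    one_smul, mul_assoc (dg q 2) (sh 1), ← mul_assoc (sh 1) (sh (-1)), sh_mul,
    show (1 + -1 : ℤ) = 0 by norm_num, sh_zero, one_mul, dg_mul hq0,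
    show (2 + -2 : ℤ) = 0 by norm_num, dg_zero]

lemma ev2_DiD (hq0 : q ≠ 0) :
    (-(q • (sh (-1) * dg q (-2))) * -(q⁻¹ • (dg q 2 * sh 1))
      : Module.End ℂ (ℤ →₀ ℂ)) = 1 := by
  have hneg : (-(q • (sh (-1) * dg q (-2))) * -(q⁻¹ • (dg q 2 * sh 1))
      : Module.End ℂ (ℤ →₀ ℂ))
      = (q • (sh (-1) * dg q (-2))) * (q⁻¹ • (dg q 2 * sh 1)) := by
    apply Finsupp.lhom_ext
    intro n v
    simp only [Module.End.mul_apply, LinearMap.neg_apply, map_neg, neg_neg]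
  rw [hneg, smul_mul_assoc, mul_smul_comm, smul_smul, mul_inv_cancel₀ hq0,
    one_smul, mul_assoc (sh (-1)) (dg q (-2)), ← mul_assoc (dg q (-2)) (dg q 2),
    dg_mul hq0, show (-2 + 2 : ℤ) = 0 by norm_num, dg_zero, one_mul, sh_mul,
    show (-1 + 1 : ℤ) = 0 by norm_num, sh_zero]

lemma ev2_rel (hq0 : q ≠ 0) {x y : FreeAlgebra ℂ Gen} (h : URel q x y) :
    ev2 q x = ev2 q y := by
  induction h with
  | ab => simp only [ev2, map_mul, map_smul, FreeAlgebra.lift_ι_apply]; simp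
  | cd => simp only [ev2, map_mul, map_smul, FreeAlgebra.lift_ι_apply]; simp
  | ac => simp only [ev2, map_mul, map_smul, FreeAlgebra.lift_ι_apply]; simp
  | bd => simp only [ev2, map_mul, map_smul, FreeAlgebra.lift_ι_apply]; simp
  | ad => simp only [ev2, map_mul, FreeAlgebra.lift_ι_apply]
  | bc =>
      simp only [ev2, map_mul, map_smul, FreeAlgebra.lift_ι_apply]
      exact dg_sh_comm hq0
  | DDi =>
      simp only [ev2, map_mul, map_one, FreeAlgebra.lift_ι_apply]
      exact ev2_DDi hq0
  | DiD =>
      simp only [ev2, map_mul, map_one, FreeAlgebra.lift_ι_apply]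
      exact ev2_DiD hq0
  | det =>
      simp only [ev2, map_sub, map_mul, map_smul, FreeAlgebra.lift_ι_apply]
      show (0 * 0 - q⁻¹ • (dg q 2 * sh 1) : Module.End ℂ (ℤ →₀ ℂ))
          = -(q⁻¹ • (dg q 2 * sh 1))
      rw [mul_zero]
      apply Finsupp.lhom_ext
      intro n v
      simp only [LinearMap.sub_apply, LinearMap.zero_apply, LinearMap.neg_apply, zero_sub]

def ev2U (q : ℂ) (hq0 : q ≠ 0) : Uq q →ₐ[ℂ] Module.End ℂ (ℤ →₀ ℂ) :=
  RingQuot.liftAlgHom ℂ ⟨ev2 q, fun _ _ h => ev2_rel hq0 h⟩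

lemma ev2U_gen (hq0 : q ≠ 0) (g : Gen) :
    ev2U q hq0 (RingQuot.mkAlgHom ℂ (URel q) (FreeAlgebra.ι ℂ g))
      = ev2 q (FreeAlgebra.ι ℂ g) := by
  simp [ev2U, RingQuot.liftAlgHom_mkAlgHom_apply]

lemma ev2U_a (hq0 : q ≠ 0) : ev2U q hq0 (Uq.a q) = 0 := by
  rw [Uq.a, ev2U_gen]; simp [ev2, FreeAlgebra.lift_ι_apply]
lemma ev2U_d (hq0 : q ≠ 0) : ev2U q hq0 (Uq.d q) = 0 := by
  rw [Uq.d, ev2U_gen]; simp [ev2, FreeAlgebra.lift_ι_apply]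

lemma ev2U_rel (hq0 : q ≠ 0) {x y : Uq q} (h : DRel q x y) :
    ev2U q hq0 x = ev2U q hq0 y := by
  cases h <;> simp [map_mul, map_zero, ev2U_a, ev2U_d]

def ev2A (q : ℂ) (hq0 : q ≠ 0) : ADT q →ₐ[ℂ] Module.End ℂ (ℤ →₀ ℂ) :=
  RingQuot.liftAlgHom ℂ ⟨ev2U q hq0, fun _ _ h => ev2U_rel hq0 h⟩

lemma ev2A_mk (hq0 : q ≠ 0) (u : Uq q) :
    ev2A q hq0 (ADT.mk q u) = ev2U q hq0 u := by
  simp [ev2A, ADT.mk, RingQuot.liftAlgHom_mkAlgHom_apply]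

lemma ev2A_z (hq0 : q ≠ 0) : ev2A q hq0 (ADT.z q) = 0 := by
  simp only [ADT.z, ADT.a, ADT.d, ADT.Di, map_mul, ev2A_mk, ev2U_a, ev2U_d]
  simp

lemma z_ne_one (hq0 : q ≠ 0) : ADT.z q ≠ 1 := by
  intro h
  have h2 := ev2A_z hq0
  rw [h, map_one] at h2
  have h3 := congrArg (fun f : Module.End ℂ (ℤ →₀ ℂ) => f (Finsupp.single 0 1)) h2
  simp only [Module.End.one_apply, LinearMap.zero_apply] at h3
  exact one_ne_zero (α := ℂ) (Finsupp.single_eq_zero.mp h3)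

/-! ### centrality and star -/

lemma z_central (hq0 : q ≠ 0) (p : ADT q) : ADT.z q * p = p * ADT.z q := by
  obtain ⟨u, rfl⟩ := RingQuot.mkAlgHom_surjective ℂ (DRel q) p
  obtain ⟨x, rfl⟩ := RingQuot.mkAlgHom_surjective ℂ (URel q) u
  induction x using FreeAlgebra.induction with
  | grade0 r =>
      rw [AlgHom.commutes, AlgHom.commutes]
      exact (Algebra.commutes r (ADT.z q)).symm
  | grade1 g =>
      cases g
      · exact comm_z_a hq0
      · exact comm_z_b hq0
      · exact comm_z_c hq0
      · exact comm_z_d hq0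
      · exact comm_z_D hq0
      · exact comm_z_E hq0
  | mul x y hx hy =>
      rw [map_mul, map_mul, ← mul_assoc, hx, mul_assoc, hy, ← mul_assoc]
  | add x y hx hy =>
      rw [map_add, map_add, mul_add, add_mul, hx, hy]

lemma z_star (hq0 : q ≠ 0) (st : ADTStar q) : st.st (ADT.z q) = ADT.z q := by
  have h0 : st.st (ADT.z q)
      = ((ADT.Di q * ADT.a q) * (ADT.Di q * ADT.d q)) * ADT.D q := by
    rw [show ADT.z q = ADT.Di q * (ADT.a q * ADT.d q) from rfl, st.mul, st.mul,
      st.sta, st.std, st.stDi]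
  rw [h0]
  calc ((ADT.Di q * ADT.a q) * (ADT.Di q * ADT.d q)) * ADT.D q
      = (ADT.Di q * ((ADT.a q * ADT.Di q) * ADT.d q)) * ADT.D q := by
        rw [mul_assoc (ADT.Di q) (ADT.a q) (ADT.Di q * ADT.d q),
          ← mul_assoc (ADT.a q) (ADT.Di q) (ADT.d q)]
    _ = (ADT.Di q * ((ADT.Di q * ADT.a q) * ADT.d q)) * ADT.D q := by
        rw [comm_Ea hq0]
    _ = ADT.Di q * (ADT.Di q * ((ADT.a q * ADT.d q) * ADT.D q)) := by
        rw [mul_assoc (ADT.Di q) (ADT.a q) (ADT.d q), mul_assoc, mul_assoc]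
    _ = ADT.Di q * (ADT.Di q * (ADT.D q * (ADT.a q * ADT.d q))) := by
        rw [comm_adD hq0]
    _ = ADT.Di q * ((ADT.Di q * ADT.D q) * (ADT.a q * ADT.d q)) := by
        rw [mul_assoc (ADT.Di q) (ADT.D q) (ADT.a q * ADT.d q)]
    _ = ADT.z q := by rw [rel_DiD, one_mul]; rfl

end Maps

/-- In `A(DT²_q)` the element `z = D⁻¹ad` is a non-trivial self-adjoint
central idempotent; hence the quantum double-torus is disconnected. -/
theorem statement_3 (q : ℂ) (hq : ‖q‖ = 1) (st : ADTStar q) :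
    ADT.z q * ADT.z q = ADT.z q
    ∧ (∀ p : ADT q, ADT.z q * p = p * ADT.z q)
    ∧ st.st (ADT.z q) = ADT.z q
    ∧ ADT.z q ≠ 0
    ∧ ADT.z q ≠ 1 := by
  have hq0 : q ≠ 0 := by
    intro h
    rw [h] at hq
    simp at hq
  exact ⟨z_idem hq0, z_central hq0, z_star hq0 st, z_ne_zero, z_ne_one hq0⟩

end QDT
end
end

section
/- In A(DT²_q): Δ(z) = z⊗z + (1−z)⊗(1−z). Consequently, for every m ∈ ℤ the elements χ_m := Dᵐ and χ_m^z := Dᵐ(2z−1) are group-like (Δ(g) = g⊗g and ε(g) = 1) and unitary (g*g = gg* = 1); they give one-dimensional unitary corepresentations of A(DT²_q). -/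
open scoped TensorProduct
noncomputable section
namespace QDT

/-! ### Auxiliary lemmas -/

section StarLemmas
variable {A : Type} [Ring A] [Algebra ℂ A] (s : StarData A)

lemma StarData.st_one : s.st 1 = 1 := by
  have h := s.mul (s.st 1) 1
  rw [mul_one, s.invol] at h
  rw [mul_one] at h
  exact h.symm

lemma StarData.st_pow (x : A) (n : ℕ) : s.st (x ^ n) = (s.st x) ^ n := by
  induction n with
  | zero => simpa using s.st_one
  | succ n ih => rw [pow_succ, s.mul, ih, ← pow_succ']

lemma StarData.st_sub (p r : A) : s.st (p - r) = s.st p - s.st r := by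
  have h : p - r = p + (-1 : ℂ) • r := by rw [neg_one_smul, ← sub_eq_add_neg]
  rw [h, s.add, s.smul]
  simp [sub_eq_add_neg]

end StarLemmas

namespace Uq
variable (q : ℂ)

lemma rDDi : D q * Di q = 1 := by
  have h := RingQuot.mkAlgHom_rel ℂ (URel.DDi (q := q))
  rw [map_mul, map_one] at h
  exact h

lemma rDiD : Di q * D q = 1 := by
  have h := RingQuot.mkAlgHom_rel ℂ (URel.DiD (q := q))
  rw [map_mul, map_one] at h
  exact h

lemma rad : a q * d q = d q * a q := by
  have h := RingQuot.mkAlgHom_rel ℂ (URel.ad (q := q))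
  rw [map_mul, map_mul] at h
  exact h

lemma rdet : a q * d q - q⁻¹ • (b q * c q) = D q := by
  have h := RingQuot.mkAlgHom_rel ℂ (URel.det (q := q))
  rw [map_sub, map_smul, map_mul, map_mul] at h
  exact h

lemma rac : a q * c q = q • (c q * a q) := by
  have h := RingQuot.mkAlgHom_rel ℂ (URel.ac (q := q))
  rw [map_mul, map_smul, map_mul] at h
  exact h

lemma rbd : b q * d q = q • (d q * b q) := by
  have h := RingQuot.mkAlgHom_rel ℂ (URel.bd (q := q))
  rw [map_mul, map_smul, map_mul] at h
  exact h

lemma rbc : b q * c q = (q ^ 2) • (c q * b q) := by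
  have h := RingQuot.mkAlgHom_rel ℂ (URel.bc (q := q))
  rw [map_mul, map_smul, map_mul] at h
  exact h

end Uq

namespace ADT
variable (q : ℂ)

lemma hDDi : D q * Di q = 1 := by
  have h := congrArg (mk q) (Uq.rDDi q)
  rw [map_mul, map_one] at h
  exact h

lemma hDiD : Di q * D q = 1 := by
  have h := congrArg (mk q) (Uq.rDiD q)
  rw [map_mul, map_one] at h
  exact h

lemma had : a q * d q = d q * a q := by
  have h := congrArg (mk q) (Uq.rad q)
  rw [map_mul, map_mul] at h
  exact h

lemma hdet : a q * d q - q⁻¹ • (b q * c q) = D q := by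
  have h := congrArg (mk q) (Uq.rdet q)
  rw [map_sub, map_smul, map_mul, map_mul] at h
  exact h

lemma hac : a q * c q = q • (c q * a q) := by
  have h := congrArg (mk q) (Uq.rac q)
  rw [map_mul, map_smul, map_mul] at h
  exact h

lemma hbd : b q * d q = q • (d q * b q) := by
  have h := congrArg (mk q) (Uq.rbd q)
  rw [map_mul, map_smul, map_mul] at h
  exact h

lemma hbc : b q * c q = (q ^ 2) • (c q * b q) := by
  have h := congrArg (mk q) (Uq.rbc q)
  rw [map_mul, map_smul, map_mul] at h
  exact h

lemma ab0 : a q * b q = 0 := by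
  have h := RingQuot.mkAlgHom_rel ℂ (DRel.ab (q := q))
  rw [map_mul, map_zero] at h
  exact h

lemma ac0 : a q * c q = 0 := by
  have h := RingQuot.mkAlgHom_rel ℂ (DRel.ac (q := q))
  rw [map_mul, map_zero] at h
  exact h

lemma cd0 : c q * d q = 0 := by
  have h := RingQuot.mkAlgHom_rel ℂ (DRel.cd (q := q))
  rw [map_mul, map_zero] at h
  exact h

lemma bd0 : b q * d q = 0 := by
  have h := RingQuot.mkAlgHom_rel ℂ (DRel.bd (q := q))
  rw [map_mul, map_zero] at h
  exact h

lemma ca0 (hq : q ≠ 0) : c q * a q = 0 := by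
  have h := hac q
  rw [ac0] at h
  exact (smul_eq_zero.mp h.symm).resolve_left hq

lemma db0 (hq : q ≠ 0) : d q * b q = 0 := by
  have h := hbd q
  rw [bd0] at h
  exact (smul_eq_zero.mp h.symm).resolve_left hq

/- Helper identities stated at the concrete type `ADT q` so that `rw` matches
the instances appearing in goals. -/
lemma subm (x y w : ADT q) : (x - y) * w = x * w - y * w := by exact sub_mul x y w
lemma msub (x y w : ADT q) : x * (y - w) = x * y - x * w := by exact mul_sub x y w
lemma smulmul (c : ℂ) (x y : ADT q) : (c • x) * y = c • (x * y) := by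
  exact smul_mul_assoc c x y
lemma mulsmul (c : ℂ) (x y : ADT q) : x * (c • y) = c • (x * y) := by
  exact mul_smul_comm c x y
lemma smsm (c e : ℂ) (x : ADT q) : c • e • x = (c * e) • x := by
  exact smul_smul c e x
lemma ssc (x y : ADT q) : x - (x - y) = y := by exact sub_sub_cancel x y
lemma subz (x : ADT q) : x - 0 = x := by exact sub_zero x

lemma abc0 : a q * (b q * c q) = 0 := by rw [← mul_assoc, ab0, zero_mul]
lemma bca0 (hq : q ≠ 0) : (b q * c q) * a q = 0 := by
  rw [mul_assoc, ca0 q hq, mul_zero]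
lemma bcd0 : (b q * c q) * d q = 0 := by rw [mul_assoc, cd0, mul_zero]
lemma dbc0 (hq : q ≠ 0) : d q * (b q * c q) = 0 := by
  rw [← mul_assoc, db0 q hq, zero_mul]

lemma Da (hq : q ≠ 0) : D q * a q = a q * D q := by
  rw [← hdet, subm, smulmul, bca0 q hq, smul_zero, subz,
    msub, mulsmul, abc0, smul_zero, subz, mul_assoc, ← had]

lemma Dd (hq : q ≠ 0) : D q * d q = d q * D q := by
  rw [← hdet, subm, smulmul, bcd0, smul_zero, subz,
    msub, mulsmul, dbc0 q hq, smul_zero, subz, had, mul_assoc, had]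

lemma Di_comm (x : ADT q) (h : D q * x = x * D q) : Di q * x = x * Di q := by
  calc Di q * x = Di q * (x * (D q * Di q)) := by rw [hDDi, mul_one]
    _ = Di q * ((x * D q) * Di q) := by rw [mul_assoc]
    _ = Di q * ((D q * x) * Di q) := by rw [h]
    _ = ((Di q * D q) * x) * Di q := by rw [← mul_assoc, ← mul_assoc]
    _ = x * Di q := by rw [hDiD, one_mul]

lemma Dad (hq : q ≠ 0) : D q * (a q * d q) = (a q * d q) * D q := by
  rw [← mul_assoc, Da q hq, mul_assoc, Dd q hq, ← mul_assoc]

lemma Diad (hq : q ≠ 0) : Di q * (a q * d q) = (a q * d q) * Di q :=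
  Di_comm q _ (Dad q hq)

lemma bcad0 (hq : q ≠ 0) : (b q * c q) * (a q * d q) = 0 := by
  rw [mul_assoc, ← mul_assoc (c q), ca0 q hq, zero_mul, mul_zero]

lemma adad (hq : q ≠ 0) : (a q * d q) * (a q * d q) = D q * (a q * d q) := by
  conv_rhs => rw [← hdet]
  rw [subm, smulmul, bcad0 q hq, smul_zero, subz]

lemma z_def : z q = Di q * (a q * d q) := rfl

lemma z_sq (hq : q ≠ 0) : z q * z q = z q := by
  have h1 : z q * z q = Di q * (((a q * d q) * Di q) * (a q * d q)) := by
    rw [z_def]; simp only [mul_assoc]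
  rw [h1, ← Diad q hq]
  have h2 : Di q * ((Di q * (a q * d q)) * (a q * d q))
      = (Di q * Di q) * ((a q * d q) * (a q * d q)) := by simp only [mul_assoc]
  rw [h2, adad q hq]
  have h3 : (Di q * Di q) * (D q * (a q * d q))
      = Di q * ((Di q * D q) * (a q * d q)) := by simp only [mul_assoc]
  rw [h3, hDiD, one_mul, z_def]

lemma bc_eq (hq : q ≠ 0) : b q * c q = q • (a q * d q - D q) := by
  have h := hdet q
  rw [← h, ssc, smsm, mul_inv_cancel₀ hq, one_smul]

lemma Dibc (hq : q ≠ 0) : Di q * (b q * c q) = q • (z q - 1) := by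
  rw [bc_eq q hq, mulsmul, msub, hDiD, z_def]

lemma Dicb (hq : q ≠ 0) : Di q * (c q * b q) = q⁻¹ • (z q - 1) := by
  have hcb : c q * b q = (q ^ 2)⁻¹ • (b q * c q) := by
    rw [hbc, smsm, inv_mul_cancel₀ (pow_ne_zero 2 hq), one_smul]
  rw [hcb, mulsmul, Dibc q hq, smsm,
    show (q ^ 2)⁻¹ * q = q⁻¹ by
      rw [sq, mul_inv, mul_assoc, inv_mul_cancel₀ hq, mul_one]]

lemma subneg : z q - 1 = (-1 : ℂ) • (1 - z q) := by
  have h1 : (-1 : ℂ) • ((1 : ADT q) - z q) = -((1 : ADT q) - z q) := by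
    exact neg_one_smul ℂ ((1 : ADT q) - z q)
  rw [h1]
  exact (neg_sub (1 : ADT q) (z q)).symm

lemma onem : (1 : ADT q) - z q = 1 + (-1 : ℂ) • z q := by
  have h1 : (-1 : ℂ) • z q = -(z q) := by exact neg_one_smul ℂ (z q)
  rw [h1]
  exact sub_eq_add_neg (1 : ADT q) (z q)

lemma chim : (2 : ℂ) • z q - 1 = (2 : ℂ) • z q + (-1 : ℂ) • (1 : ADT q) := by
  have h1 : (-1 : ℂ) • (1 : ADT q) = -(1 : ADT q) := by
    exact neg_one_smul ℂ (1 : ADT q)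
  rw [h1]
  exact sub_eq_add_neg ((2 : ℂ) • z q) (1 : ADT q)

lemma Dibc2 (hq : q ≠ 0) : Di q * (b q * c q) = (-q) • (1 - z q) := by
  rw [Dibc q hq, subneg, smsm, mul_neg_one]

lemma Dicb2 (hq : q ≠ 0) : Di q * (c q * b q) = (-q⁻¹) • (1 - z q) := by
  rw [Dicb q hq, subneg, smsm, mul_neg_one]

lemma pow_DDi (n : ℕ) : D q ^ n * Di q ^ n = 1 := by
  induction n with
  | zero => simp
  | succ n ih =>
    rw [pow_succ, pow_succ', mul_assoc, ← mul_assoc (D q), hDDi, one_mul, ih]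

lemma pow_DiD (n : ℕ) : Di q ^ n * D q ^ n = 1 := by
  induction n with
  | zero => simp
  | succ n ih =>
    rw [pow_succ, pow_succ', mul_assoc, ← mul_assoc (Di q), hDiD, one_mul, ih]

lemma DzDz (m : ℤ) : Dz q m * Dz q (-m) = 1 := by
  rcases lt_trichotomy m 0 with h | h | h
  · rw [Dz, if_neg (not_le.mpr h), Dz, if_pos (by omega : (0:ℤ) ≤ -m), pow_DiD]
  · subst h; simp [Dz]
  · rw [Dz, if_pos h.le, Dz, if_neg (by omega : ¬ (0:ℤ) ≤ -m), neg_neg, pow_DDi]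

lemma DzDz' (m : ℤ) : Dz q (-m) * Dz q m = 1 := by
  have h := DzDz q (-m)
  rwa [neg_neg] at h

/- Tensor-level helpers (stated at the concrete type). -/
lemma tsmul_l (c : ℂ) (x y : ADT q) :
    (c • x) ⊗ₜ[ℂ] y = c • (x ⊗ₜ[ℂ] y) := (TensorProduct.smul_tmul' c x y).symm
lemma tsmul_r (c : ℂ) (x y : ADT q) :
    x ⊗ₜ[ℂ] (c • y) = c • (x ⊗ₜ[ℂ] y) := TensorProduct.tmul_smul c x y
lemma smsmT (c e : ℂ) (t : ADT q ⊗[ℂ] ADT q) : c • e • t = (c * e) • t :=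
  smul_smul c e t
lemma oneT (t : ADT q ⊗[ℂ] ADT q) : (1 : ℂ) • t = t := one_smul ℂ t

lemma Δz (hq : q ≠ 0) (C : ADTCoalg q) :
    C.Δ (z q) = z q ⊗ₜ z q + (1 - z q) ⊗ₜ (1 - z q) := by
  have h1 : C.Δ (z q)
      = (Di q ⊗ₜ Di q) * ((a q ⊗ₜ a q + b q ⊗ₜ c q) * (c q ⊗ₜ b q + d q ⊗ₜ d q)) := by
    rw [z_def, map_mul, map_mul, C.ΔDi, C.Δa, C.Δd]
  have hterm : (Di q * (b q * c q)) ⊗ₜ[ℂ] (Di q * (c q * b q))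
      = (1 - z q) ⊗ₜ[ℂ] (1 - z q) := by
    rw [Dibc2 q hq, Dicb2 q hq, tsmul_l, tsmul_r, smsmT,
      show -q * -q⁻¹ = 1 by rw [neg_mul_neg, mul_inv_cancel₀ hq], oneT]
  rw [h1]
  simp only [mul_add, add_mul, Algebra.TensorProduct.tmul_mul_tmul, ac0, bd0,
    mul_zero, zero_mul, TensorProduct.zero_tmul, TensorProduct.tmul_zero,
    zero_add, add_zero]
  rw [hterm, ← z_def]
  abel

lemma εz (C : ADTCoalg q) : C.ε (z q) = 1 := by
  rw [z_def, map_mul, map_mul, C.εDi, C.εa, C.εd, one_mul, one_mul]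

lemma ΔDz (C : ADTCoalg q) (m : ℤ) :
    C.Δ (Dz q m) = Dz q m ⊗ₜ Dz q m := by
  rcases le_or_gt 0 m with h | h
  · rw [Dz, if_pos h, map_pow, C.ΔD, Algebra.TensorProduct.tmul_pow]
  · rw [Dz, if_neg (not_le.mpr h), map_pow, C.ΔDi, Algebra.TensorProduct.tmul_pow]

lemma εDz (C : ADTCoalg q) (m : ℤ) : C.ε (Dz q m) = 1 := by
  rcases le_or_gt 0 m with h | h
  · rw [Dz, if_pos h, map_pow, C.εD, one_pow]
  · rw [Dz, if_neg (not_le.mpr h), map_pow, C.εDi, one_pow]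

lemma stDz (st : ADTStar q) (m : ℤ) : st.st (Dz q m) = Dz q (-m) := by
  rcases lt_trichotomy m 0 with h | h | h
  · rw [Dz, if_neg (not_le.mpr h), st.toStarData.st_pow, st.stDi,
      Dz, if_pos (by omega : (0:ℤ) ≤ -m)]
  · subst h
    simp only [Dz, neg_zero, le_refl, if_pos, Int.toNat_zero, pow_zero]
    exact st.toStarData.st_one
  · rw [Dz, if_pos h.le, st.toStarData.st_pow, st.stD,
      Dz, if_neg (by omega : ¬ (0:ℤ) ≤ -m), neg_neg]

lemma εsmul (C : ADTCoalg q) (c : ℂ) (x : ADT q) : C.ε (c • x) = c • C.ε x :=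
  map_smul _ _ _
lemma εone (C : ADTCoalg q) : C.ε 1 = 1 := map_one _
lemma Δsmul (C : ADTCoalg q) (c : ℂ) (x : ADT q) : C.Δ (c • x) = c • C.Δ x :=
  map_smul _ _ _

lemma st_z (hq : q ≠ 0) (st : ADTStar q) : st.st (z q) = z q := by
  have h1 : st.st (z q) = ((Di q * a q) * (Di q * d q)) * D q := by
    rw [z_def, st.mul, st.mul, st.sta, st.std, st.stDi]
  have hDia : Di q * a q = a q * Di q := Di_comm q _ (Da q hq)
  rw [h1, hDia]
  have h2 : ((a q * Di q) * (Di q * d q)) * D q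
      = a q * ((Di q * Di q) * (d q * D q)) := by simp only [mul_assoc]
  rw [h2, ← Dd q hq]
  have h3 : a q * ((Di q * Di q) * (D q * d q))
      = a q * (Di q * ((Di q * D q) * d q)) := by simp only [mul_assoc]
  rw [h3, hDiD, one_mul]
  have h4 : a q * (Di q * d q) = Di q * (a q * d q) := by
    rw [← mul_assoc, ← hDia, mul_assoc]
  rw [h4, ← z_def]

lemma st_chi0 (hq : q ≠ 0) (st : ADTStar q) :
    st.st ((2 : ℂ) • z q - 1) = (2 : ℂ) • z q - 1 := by
  rw [st.toStarData.st_sub, st.toStarData.st_one, st.smul, st_z q hq st]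
  norm_num [Complex.conj_ofNat]

lemma chi0_sq (hq : q ≠ 0) :
    ((2 : ℂ) • z q - 1) * ((2 : ℂ) • z q - 1) = 1 := by
  rw [chim]
  simp only [mul_add, add_mul, smulmul, mulsmul, smsm, mul_one, one_mul]
  rw [z_sq q hq]
  module

lemma Δchi0 (hq : q ≠ 0) (C : ADTCoalg q) :
    C.Δ ((2 : ℂ) • z q - 1) = ((2 : ℂ) • z q - 1) ⊗ₜ ((2 : ℂ) • z q - 1) := by
  rw [chim, map_add, Δsmul, Δsmul, map_one, Δz q hq C, onem,
    Algebra.TensorProduct.one_def]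
  simp only [TensorProduct.tmul_add, TensorProduct.add_tmul, tsmul_l, tsmul_r,
    smul_add, smsmT]
  module

end ADT

/-- In `A(DT²_q)`: `Δ(z) = z⊗z + (1−z)⊗(1−z)`; consequently for every
`m ∈ ℤ` the elements `χ_m = D^m` and `χ_m^z = D^m(2z−1)` are group-like and unitary
(one-dimensional unitary corepresentations). -/
theorem statement_15 (q : ℂ) (hq : ‖q‖ = 1) (C : ADTCoalg q) (st : ADTStar q) :
    C.Δ (ADT.z q) = ADT.z q ⊗ₜ ADT.z q + (1 - ADT.z q) ⊗ₜ (1 - ADT.z q)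
    ∧ (∀ m : ℤ,
        C.Δ (ADT.Dz q m) = ADT.Dz q m ⊗ₜ ADT.Dz q m
        ∧ C.ε (ADT.Dz q m) = 1
        ∧ st.st (ADT.Dz q m) * ADT.Dz q m = 1
        ∧ ADT.Dz q m * st.st (ADT.Dz q m) = 1)
    ∧ (∀ m : ℤ,
        C.Δ (ADT.Dz q m * ((2 : ℂ) • ADT.z q - 1))
            = (ADT.Dz q m * ((2 : ℂ) • ADT.z q - 1)) ⊗ₜ (ADT.Dz q m * ((2 : ℂ) • ADT.z q - 1))
        ∧ C.ε (ADT.Dz q m * ((2 : ℂ) • ADT.z q - 1)) = 1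
        ∧ st.st (ADT.Dz q m * ((2 : ℂ) • ADT.z q - 1)) * (ADT.Dz q m * ((2 : ℂ) • ADT.z q - 1)) = 1
        ∧ (ADT.Dz q m * ((2 : ℂ) • ADT.z q - 1)) * st.st (ADT.Dz q m * ((2 : ℂ) • ADT.z q - 1)) = 1) := by
  have hq0 : q ≠ 0 := by
    intro h; rw [h] at hq; simp at hq
  refine ⟨ADT.Δz q hq0 C, fun m => ⟨ADT.ΔDz q C m, ADT.εDz q C m, ?_, ?_⟩,
    fun m => ⟨?_, ?_, ?_, ?_⟩⟩
  · rw [ADT.stDz q st m, ADT.DzDz']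
  · rw [ADT.stDz q st m, ADT.DzDz]
  · rw [map_mul, ADT.ΔDz q C m, ADT.Δchi0 q hq0 C,
      Algebra.TensorProduct.tmul_mul_tmul]
  · rw [map_mul, ADT.εDz q C m, one_mul, ADT.chim, map_add, ADT.εsmul,
      ADT.εsmul, ADT.εone q C, ADT.εz q C, smul_eq_mul, smul_eq_mul]
    norm_num
  · rw [st.mul, ADT.st_chi0 q hq0 st, ADT.stDz q st m,
      mul_assoc, ← mul_assoc (ADT.Dz q (-m)), ADT.DzDz', one_mul,
      ADT.chi0_sq q hq0]
  · rw [st.mul, ADT.st_chi0 q hq0 st, ADT.stDz q st m,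
      mul_assoc, ← mul_assoc ((2 : ℂ) • ADT.z q - 1), ADT.chi0_sq q hq0,
      one_mul, ADT.DzDz]

end QDT
end
end
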